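/- The group G of order 2^10 given by generators a, b, c with relations: [b,a], [c,a], [c,b] central of order 2, a² = [c,b], b⁸ = c⁸ = 1, is a quotient of the group ⟨a, b, c ∣ a b⁻² a b² [b,c] = 1⟩. Equivalently, in G the relation a b⁻² a b² [b,c] = 1 holds after replacing a by ab⁻². -/
import Mathlib


namespace Stmt6

/-- The commutator `[x,y] = x⁻¹y⁻¹xy` (the convention used in the paper). -/
def pc {H : Type*} [Group H] (x y : H) : H := x⁻¹ * y⁻¹ * x * y

def a : FreeGroup (Fin 3) := .of 0
def b : FreeGroup (Fin 3) := .of 1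
def c : FreeGroup (Fin 3) := .of 2

/-- Relations of the group `G` of order `2^10`: `γ = [b,a]`, `β = [c,a]`, `α = [c,b]`
are central of order 2, `a² = α`, `b⁸ = c⁸ = 1`. -/
def rels : Set (FreeGroup (Fin 3)) :=
  { pc (pc b a) a, pc (pc b a) b, pc (pc b a) c,
    pc (pc c a) a, pc (pc c a) b, pc (pc c a) c,
    pc (pc c b) a, pc (pc c b) b, pc (pc c b) c,
    (pc b a) ^ 2, (pc c a) ^ 2, (pc c b) ^ 2,
    a ^ 2 * (pc c b)⁻¹, b ^ 8, c ^ 8 }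

/-- The group `G` of order `2^10`. -/
abbrev G10 := PresentedGroup rels

/-- The canonical projection. -/
def π : FreeGroup (Fin 3) →* G10 := PresentedGroup.mk rels

/-- The single relation `a b⁻² a b² [b,c] = 1` (the presentation of the pro-2 Galois group
of `ℚ₂`, after replacing `a` by `ab⁻²` in `a²b⁴[b,c] = 1`). -/
def rel6 : Set (FreeGroup (Fin 3)) := { a * b⁻¹ * b⁻¹ * a * b * b * pc b c }

lemma key {H : Type*} [Group H] (A B C : H)
    (h2 : pc (pc B A) B = 1)
    (h3 : (pc B A) ^ 2 = 1) (h4 : A ^ 2 * (pc C B)⁻¹ = 1) :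
    A * B⁻¹ * B⁻¹ * A * B * B * pc B C = 1 := by
  set Γ := pc B A with hΓ
  have cB : B⁻¹ * Γ⁻¹ * B = Γ⁻¹ := by
    have h : Γ⁻¹ * B⁻¹ * Γ * B = 1 := h2
    have comm : B * Γ = Γ * B := by
      have := congrArg (fun z => B * Γ * z) h
      simpa [mul_assoc] using this.symm
    calc B⁻¹ * Γ⁻¹ * B = B⁻¹ * Γ⁻¹ * ((B * Γ) * Γ⁻¹) := by group
    _ = B⁻¹ * Γ⁻¹ * ((Γ * B) * Γ⁻¹) := by rw [comm]
    _ = Γ⁻¹ := by group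
  have s2 : B⁻¹ * A * B = A * Γ⁻¹ := by
    rw [hΓ, pc]; group
  have s4 : Γ⁻¹ * Γ⁻¹ = 1 := by
    have := congrArg (·⁻¹) h3
    simpa [pow_two, mul_inv_rev] using this
  have s5 : pc B C = (pc C B)⁻¹ := by simp [pc, mul_assoc]
  calc A * B⁻¹ * B⁻¹ * A * B * B * pc B C
      = A * (B⁻¹ * (B⁻¹ * A * B) * B) * pc B C := by group
    _ = A * (B⁻¹ * (A * Γ⁻¹) * B) * pc B C := by rw [s2]
    _ = A * ((B⁻¹ * A * B) * (B⁻¹ * Γ⁻¹ * B)) * pc B C := by group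
    _ = A * ((A * Γ⁻¹) * Γ⁻¹) * pc B C := by rw [s2, cB]
    _ = A * A * (Γ⁻¹ * Γ⁻¹) * pc B C := by group
    _ = A ^ 2 * (pc C B)⁻¹ := by rw [s4, mul_one, s5, sq]
    _ = 1 := h4

lemma rel_holds :
    π a * (π b)⁻¹ * (π b)⁻¹ * π a * π b * π b * pc (π b) (π c) = 1 := by
  have hπ : ∀ r ∈ rels, π r = 1 := by
    intro r hr
    exact (QuotientGroup.eq_one_iff r).mpr (Subgroup.subset_normalClosure hr)
  have hpc : ∀ x y : FreeGroup (Fin 3), π (pc x y) = pc (π x) (π y) := by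
    intro x y; simp [pc]
  have h2 : pc (pc (π b) (π a)) (π b) = 1 := by
    rw [← hpc, ← hpc]
    exact hπ _ (by simp [rels])
  have h3 : (pc (π b) (π a)) ^ 2 = 1 := by
    rw [← hpc, ← map_pow]
    exact hπ _ (by simp [rels])
  have h4 : (π a) ^ 2 * (pc (π c) (π b))⁻¹ = 1 := by
    rw [← hpc, ← map_inv, ← map_pow, ← map_mul]
    exact hπ _ (by simp [rels])
  exact key (π a) (π b) (π c) h2 h3 h4

/-- The group `G` of order `2^10` above is a quotient of
`⟨a, b, c ∣ a b⁻² a b² [b,c] = 1⟩` (via `a ↦ a`, `b ↦ b`, `c ↦ c`); equivalently, the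
relation `a b⁻² a b² [b,c] = 1` holds in `G`. -/
theorem stmt_6 :
    (∃ f : PresentedGroup rel6 →* G10, Function.Surjective f ∧
      f (PresentedGroup.of 0) = π a ∧ f (PresentedGroup.of 1) = π b ∧
      f (PresentedGroup.of 2) = π c) ∧
    π a * (π b)⁻¹ * (π b)⁻¹ * π a * π b * π b * pc (π b) (π c) = 1 := by
  have hrel := rel_holds
  have hlift : ∀ r ∈ rel6, FreeGroup.lift (fun i => π (FreeGroup.of i)) r = 1 := by
    intro r hr
    have hπeq : FreeGroup.lift (fun i => π (FreeGroup.of i)) = π := by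
      ext i; simp
    rw [hπeq]
    rcases hr with rfl
    simpa [a, b, c, pc, map_mul, map_inv, mul_assoc] using
      (by simpa [mul_assoc, pc] using hrel :
        π a * ((π b)⁻¹ * ((π b)⁻¹ * (π a * (π b * (π b *
          ((π b)⁻¹ * ((π c)⁻¹ * (π b * π c)))))))) = 1)
  refine ⟨⟨PresentedGroup.toGroup hlift, ?_, ?_, ?_, ?_⟩, hrel⟩
  · have hcomp : (PresentedGroup.toGroup hlift).comp (PresentedGroup.mk rel6) = π := by
      ext i
      exact PresentedGroup.toGroup.of hlift
    intro x
    obtain ⟨w, rfl⟩ := PresentedGroup.mk_surjective rels x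
    exact ⟨PresentedGroup.mk rel6 w, DFunLike.congr_fun hcomp w⟩
  · exact PresentedGroup.toGroup.of hlift
  · exact PresentedGroup.toGroup.of hlift
  · exact PresentedGroup.toGroup.of hlift

end Stmt6
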